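/- Let 0 ≤ S < T < ∞, d, d₁ ∈ ℕ and m, n ∈ ℕ₀. (i) For k₁ ∈ V_{m+1}(S,T;ℝ^{d×d}) and k₂ ∈ V_{n+1}(S,T;ℝ^{d×d}), the ▷-product k₁ ▷ k₂ belongs to V_{m+n+1}(S,T;ℝ^{d×d}) and ⦀k₁ ▷ k₂⦀_{V_{m+n+1}} ≤ ⦀k₁⦀_{V_{m+1}} · ⦀k₂⦀_{V_{n+1}}. (ii) For k ∈ V_{m+1}(S,T;ℝ^{d×d}) and f ∈ L²(Δ_{n+1}(S,T);ℝ^{d×d₁}), the ▷-product k ▷ f belongs to L²(Δ_{m+n+1}(S,T);ℝ^{d×d₁}) and ‖k ▷ f‖_{L²(Δ_{m+n+1}(S,T))} ≤ ⦀k⦀_{V_{m+1}} · ‖f‖_{L²(Δ_{n+1}(S,T))}. -/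

import Mathlib

open MeasureTheory
open scoped ENNReal

noncomputable section

/-- Frobenius norm of a real matrix. -/
def frobNorm {m n : ℕ} (A : Matrix (Fin m) (Fin n) ℝ) : ℝ :=
  Real.sqrt (∑ i, ∑ j, (A i j) ^ 2)

/-- Operator norm of a real matrix with respect to the Euclidean norms. -/
def opNorm {m n : ℕ} (A : Matrix (Fin m) (Fin n) ℝ) : ℝ :=
  ‖LinearMap.toContinuousLinearMap (Matrix.toEuclideanLin A)‖

/-- The open simplex `Δ_n(S,T) = {(t₁,…,t_n) : T > t₁ > ⋯ > t_n > S}`. -/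
def simplex (S T : ℝ) (n : ℕ) : Set (Fin n → ℝ) :=
  {t | (∀ i, t i ∈ Set.Ioo S T) ∧ ∀ i j : Fin n, i < j → t j < t i}

/-- The open cube `(0,c)ⁿ`. -/
def cubeSet (c : ℝ) (n : ℕ) : Set (Fin n → ℝ) :=
  {x | ∀ i, x i ∈ Set.Ioo 0 c}

/-- Entrywise measurability of a matrix-valued kernel. -/
def MMeasurable {d₁ d₂ n : ℕ} (f : (Fin n → ℝ) → Matrix (Fin d₁) (Fin d₂) ℝ) : Prop :=
  ∀ p q, Measurable fun t => f t p q

/-- Square of the L² norm (Frobenius norm) over the simplex, as an extended real. -/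
def l2sqE {d₁ d₂ : ℕ} (S T : ℝ) {n : ℕ}
    (f : (Fin n → ℝ) → Matrix (Fin d₁) (Fin d₂) ℝ) : ℝ≥0∞ :=
  ∫⁻ t in simplex S T n, ENNReal.ofReal (frobNorm (f t) ^ 2)

/-- L² norm over the simplex. -/
def l2Norm {d₁ d₂ : ℕ} (S T : ℝ) {n : ℕ}
    (f : (Fin n → ℝ) → Matrix (Fin d₁) (Fin d₂) ℝ) : ℝ :=
  ((l2sqE S T f) ^ (1/2 : ℝ)).toReal

/-- Membership in `L²(Δ_n(S,T))`. -/
def MemL2 {d₁ d₂ : ℕ} (S T : ℝ) {n : ℕ}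
    (f : (Fin n → ℝ) → Matrix (Fin d₁) (Fin d₂) ℝ) : Prop :=
  MMeasurable f ∧ l2sqE S T f < ⊤

/-- The Volterra norm `⦀k⦀_{V_{n+1}(S,T)}` as an extended real:
ess sup over `t ∈ (S,T)` of the L²(op-norm) over `Δ_n(t,T)` of `k(·,t)`. -/
def vNormE {d : ℕ} (S T : ℝ) {n : ℕ}
    (k : (Fin (n+1) → ℝ) → Matrix (Fin d) (Fin d) ℝ) : ℝ≥0∞ :=
  essSup
    (fun t : ℝ =>
      (∫⁻ s in simplex t T n, ENNReal.ofReal (opNorm (k (Fin.snoc s t)) ^ 2)) ^ (1/2 : ℝ))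
    (volume.restrict (Set.Ioo S T))

def vNorm {d : ℕ} (S T : ℝ) {n : ℕ}
    (k : (Fin (n+1) → ℝ) → Matrix (Fin d) (Fin d) ℝ) : ℝ :=
  (vNormE S T k).toReal

/-- Membership in `V_{n+1}(S,T;ℝ^{d×d})`. -/
def MemV {d : ℕ} (S T : ℝ) {n : ℕ}
    (k : (Fin (n+1) → ℝ) → Matrix (Fin d) (Fin d) ℝ) : Prop :=
  MMeasurable k ∧ vNormE S T k < ⊤

/-- The `▷`-product. -/
def trprod {d₁ d₂ d₃ m n : ℕ}
    (f : (Fin (m+1) → ℝ) → Matrix (Fin d₁) (Fin d₂) ℝ)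
    (g : (Fin (n+1) → ℝ) → Matrix (Fin d₂) (Fin d₃) ℝ) :
    (Fin (m+n+1) → ℝ) → Matrix (Fin d₁) (Fin d₃) ℝ :=
  fun t =>
    f (fun i => t ⟨i.1, by have := i.2; omega⟩) *
    g (fun i => t ⟨m + i.1, by have := i.2; omega⟩)

/-- Recasting the arity of a kernel along an equality of naturals. -/
def reindexKer {d₁ d₂ a b : ℕ} (h : a = b)
    (f : (Fin a → ℝ) → Matrix (Fin d₁) (Fin d₂) ℝ) :
    (Fin b → ℝ) → Matrix (Fin d₁) (Fin d₂) ℝ :=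
  fun t => f (fun i => t (Fin.cast h i))

/-- Coefficient sequences of ⋆-Volterra kernels. -/
abbrev KSeq (d : ℕ) := ∀ n : ℕ, (Fin (n+1) → ℝ) → Matrix (Fin d) (Fin d) ℝ
/-- Coefficient sequences of adapted L²-processes. -/
abbrev LSeq (d d₁ : ℕ) := ∀ n : ℕ, (Fin (n+1) → ℝ) → Matrix (Fin d) (Fin d₁) ℝ
/-- Coefficient sequences of ∗-Volterra kernels. -/
abbrev JSeq (d : ℕ) := ∀ n : ℕ, (Fin (n+2) → ℝ) → Matrix (Fin d) (Fin d) ℝ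

/-- The graded ⋆-product `(K ⋆ ξ)_n = Σ_{j≤n} K_{n-j} ▷ ξ_j`. -/
def starP {d d₁ : ℕ} (K : KSeq d) (ξ : LSeq d d₁) : LSeq d d₁ :=
  fun n => ∑ j : Fin (n+1),
    reindexKer (by have := j.2; omega) (trprod (K (n - j.1)) (ξ j.1))

def KNormE {d : ℕ} (S T : ℝ) (K : KSeq d) : ℝ≥0∞ := ∑' n, vNormE S T (K n)
def KNorm {d : ℕ} (S T : ℝ) (K : KSeq d) : ℝ := (KNormE S T K).toReal
/-- Membership in `K(S,T)` (the ⋆-Volterra kernels). -/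
def MemK {d : ℕ} (S T : ℝ) (K : KSeq d) : Prop :=
  (∀ n, MMeasurable (K n)) ∧ KNormE S T K < ⊤

def LsqE {d d₁ : ℕ} (S T : ℝ) (ξ : LSeq d d₁) : ℝ≥0∞ := ∑' n, l2sqE S T (ξ n)
def LNorm {d d₁ : ℕ} (S T : ℝ) (ξ : LSeq d d₁) : ℝ := ((LsqE S T ξ) ^ (1/2 : ℝ)).toReal
/-- Membership in `L^{d×d₁}(S,T)`. -/
def MemL {d d₁ : ℕ} (S T : ℝ) (ξ : LSeq d d₁) : Prop :=
  (∀ n, MMeasurable (ξ n)) ∧ LsqE S T ξ < ⊤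

/-- Equality in `L^{d×d₁}(S,T)` (and in `K(S,T)`): coefficientwise a.e. equality
on the corresponding simplices. -/
def LEq {d d₁ : ℕ} (S T : ℝ) (f g : LSeq d d₁) : Prop :=
  ∀ n : ℕ, f n =ᵐ[volume.restrict (simplex S T (n+1))] g n

/-- The `∗`-product of two multi-parameter kernels. -/
def astProd {d₁ d₂ d₃ a b : ℕ}
    (j : (Fin (a+2) → ℝ) → Matrix (Fin d₁) (Fin d₂) ℝ)
    (g : (Fin (b+2) → ℝ) → Matrix (Fin d₂) (Fin d₃) ℝ) :
    (Fin (a+b+2) → ℝ) → Matrix (Fin d₁) (Fin d₃) ℝ :=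
  fun t => Matrix.of fun p q =>
    ∫ s in Set.Ioo (t ⟨a+1, by omega⟩) (t ⟨a, by omega⟩),
      (j (Fin.snoc (fun i : Fin (a+1) => t ⟨i.1, by have := i.2; omega⟩) s) *
       g (Fin.cons s (fun i : Fin (b+1) => t ⟨a+1+i.1, by have := i.2; omega⟩))) p q

/-- The `∗`-product of a multi-parameter kernel with an L²-type kernel
(lower integration limit `S` when `b = 0`). -/
def astProdL {d₁ d₂ d₃ a b : ℕ} (S : ℝ)
    (j : (Fin (a+2) → ℝ) → Matrix (Fin d₁) (Fin d₂) ℝ)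
    (f : (Fin (b+1) → ℝ) → Matrix (Fin d₂) (Fin d₃) ℝ) :
    (Fin (a+b+1) → ℝ) → Matrix (Fin d₁) (Fin d₃) ℝ :=
  fun t => Matrix.of fun p q =>
    ∫ s in Set.Ioo (if h : 0 < b then t ⟨a+1, by omega⟩ else S) (t ⟨a, by omega⟩),
      (j (Fin.snoc (fun i : Fin (a+1) => t ⟨i.1, by have := i.2; omega⟩) s) *
       f (Fin.cons s (fun i : Fin b => t ⟨a+1+i.1, by have := i.2; omega⟩))) p q

def jNormE {d : ℕ} (S T : ℝ) {n : ℕ}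
    (Jn : (Fin (n+2) → ℝ) → Matrix (Fin d) (Fin d) ℝ) : ℝ≥0∞ :=
  (∫⁻ t in simplex S T (n+2), ENNReal.ofReal (opNorm (Jn t) ^ 2)) ^ (1/2 : ℝ)

def JNormE {d : ℕ} (S T : ℝ) (J : JSeq d) : ℝ≥0∞ := ∑' n, jNormE S T (J n)
def JNorm {d : ℕ} (S T : ℝ) (J : JSeq d) : ℝ := (JNormE S T J).toReal
/-- Membership in `J(S,T)` (the ∗-Volterra kernels). -/
def MemJ {d : ℕ} (S T : ℝ) (J : JSeq d) : Prop :=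
  (∀ n, MMeasurable (J n)) ∧ JNormE S T J < ⊤

/-- Equality in `J(S,T)`. -/
def JEq {d : ℕ} (S T : ℝ) (J J' : JSeq d) : Prop :=
  ∀ n : ℕ, J n =ᵐ[volume.restrict (simplex S T (n+2))] J' n

/-- Graded product `J(S,T) × J(S,T) → J(S,T)`. -/
def astP {d : ℕ} (J J' : JSeq d) : JSeq d :=
  fun n => ∑ k : Fin (n+1),
    reindexKer (by have := k.2; omega) (astProd (J (n - k.1)) (J' k.1))

/-- Graded product `J(S,T) × L(S,T) → L(S,T)` (also `J(S,T) × K(S,T) → K(S,T)`). -/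
def astPL {d d₁ : ℕ} (S : ℝ) (J : JSeq d) (ξ : LSeq d d₁) : LSeq d d₁ :=
  fun n => ∑ k : Fin (n+1),
    reindexKer (by have := k.2; omega) (astProdL S (J (n - k.1)) (ξ k.1))

/-- Graded product `K(S,T) × J(S,T) → J(S,T)`. -/
def starPJ {d : ℕ} (K : KSeq d) (J : JSeq d) : JSeq d :=
  fun n => ∑ k : Fin (n+1),
    reindexKer (by have := k.2; omega) (trprod (K (n - k.1)) (J k.1))

/-- The `k`-th term of the backward ⋆-product. -/
def bstarTerm {d d₁ : ℕ} (T : ℝ) (K : KSeq d) (ξ : LSeq d d₁) (n : ℕ)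
    (t : Fin (n+1) → ℝ) (k : ℕ) : Matrix (Fin d) (Fin d₁) ℝ :=
  if h : n ≤ k then
    Matrix.of fun p q =>
      ∫ s in simplex (t 0) T (k - n),
        (K (k - n) (Fin.snoc s (t 0)) *
         ξ k (fun i => Fin.append s t (Fin.cast (by omega) i))) p q
  else 0

/-- The backward ⋆-product. -/
def bstarP {d d₁ : ℕ} (T : ℝ) (K : KSeq d) (ξ : LSeq d d₁) : LSeq d d₁ :=
  fun n t => ∑' k : ℕ, bstarTerm T K ξ n t k

/-- The `k`-th term of the backward ∗-product. -/
def bastTerm {d d₁ : ℕ} (T : ℝ) (J : JSeq d) (ξ : LSeq d d₁) (n : ℕ)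
    (t : Fin (n+1) → ℝ) (k : ℕ) : Matrix (Fin d) (Fin d₁) ℝ :=
  if h : n ≤ k then
    Matrix.of fun p q =>
      ∫ s in simplex (t 0) T (k - n + 1),
        (J (k - n) (Fin.snoc s (t 0)) *
         ξ k (fun i => Fin.append s (fun m : Fin n => t m.succ) (Fin.cast (by omega) i))) p q
  else 0

/-- The backward ∗-product. -/
def bastP {d d₁ : ℕ} (T : ℝ) (J : JSeq d) (ξ : LSeq d d₁) : LSeq d d₁ :=
  fun n t => ∑' k : ℕ, bastTerm T J ξ n t k

/-- Coefficientwise matrix transpose. -/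
def transK {d : ℕ} (K : KSeq d) : KSeq d := fun n t => (K n t).transpose
/-- Coefficientwise matrix transpose. -/
def transJ {d : ℕ} (J : JSeq d) : JSeq d := fun n t => (J n t).transpose

/-- Inner product of `L^d(S,T)`. -/
def Linner {d : ℕ} (S T : ℝ) (φ ψ : LSeq d 1) : ℝ :=
  ∑' n, ∫ t in simplex S T (n+1), ∑ i, φ n t i 0 * ψ n t i 0

/-- `R` is the ⋆-resolvent of `K` on `(S,T)`. -/
def IsStarResolvent {d : ℕ} (S T : ℝ) (K R : KSeq d) : Prop :=
  MemK S T R ∧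
  LEq S T R (fun n t => K n t + starP K R n t) ∧
  LEq S T R (fun n t => K n t + starP R K n t)

/-- `Q` is the ∗-resolvent of `J` on `(S,T)`. -/
def IsAstResolvent {d : ℕ} (S T : ℝ) (J Q : JSeq d) : Prop :=
  MemJ S T Q ∧
  JEq S T Q (fun n t => J n t + astP J Q n t) ∧
  JEq S T Q (fun n t => J n t + astP Q J n t)

/-- `(Q,R)` is the `(∗,⋆)`-resolvent of `(J,K)` on `(S,T)`. -/
def IsAstStarResolvent {d : ℕ} (S T : ℝ) (J : JSeq d) (K : KSeq d)
    (Q : JSeq d) (R : KSeq d) : Prop :=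
  MemJ S T Q ∧ MemK S T R ∧
  JEq S T Q (fun n t => J n t + astP J Q n t + starPJ K Q n t) ∧
  JEq S T Q (fun n t => J n t + astP Q J n t + starPJ R J n t) ∧
  LEq S T R (fun n t => K n t + astPL S J R n t + starP K R n t) ∧
  LEq S T R (fun n t => K n t + astPL S Q K n t + starP R K n t)

/-- The unit of `K(S,T)`: `(I_d, 0, 0, …)`. -/
def unitK (d : ℕ) : KSeq d := fun n =>
  match n with
  | 0 => fun _ => (1 : Matrix (Fin d) (Fin d) ℝ)
  | _ + 1 => fun _ => 0

/-- `starPow K m = K^{⋆(m+1)}`. -/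
def starPow {d : ℕ} (K : KSeq d) : ℕ → KSeq d
  | 0 => K
  | m + 1 => starP K (starPow K m)

/-!
Split a point of `Δ_{m+n}(t,T)` as `(a, b)` with `a ∈ Δ_m`, `b ∈ Δ_n`. By Fubini, `b` ranges over
`Δ_n(t,T)` and `a` over `Δ_m(b₀,T)`, where `b₀` is the top coordinate of `b` (or `t` if `n = 0`);
`b₀` is exactly the time shared by the two factors of `k₁ ▷ k₂`. After `|AB| ≤ |A|_op |B|`, the
inner integral is the squared slice norm of `k₁` at `b₀`, which is at most `⦀k₁⦀²` for almost every
`b₀`, hence for almost every `b`, and what remains is the squared slice norm of `k₂` at `t`.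
Part (ii) is the same computation over `Δ_{m+n+1}(S,T)`, with the Frobenius norm on the second
factor.
-/

-- Under this instance `opNorm A` is definitionally `‖A‖`, so the `Matrix.l2_opNorm_*` lemmas apply.
open scoped Matrix Matrix.Norms.L2Operator

lemma frobNorm_sq {m n : ℕ} (A : Matrix (Fin m) (Fin n) ℝ) :
    frobNorm A ^ 2 = ∑ j, ‖WithLp.toLp 2 (fun i => A i j)‖ ^ 2 := by
  rw [frobNorm, Real.sq_sqrt (by positivity), Finset.sum_comm]
  simp [EuclideanSpace.norm_sq_eq]

lemma frobNorm_mul_sq_le {d₁ d₂ d₃ : ℕ} (A : Matrix (Fin d₁) (Fin d₂) ℝ)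
    (B : Matrix (Fin d₂) (Fin d₃) ℝ) : frobNorm (A * B) ^ 2 ≤ opNorm A ^ 2 * frobNorm B ^ 2 := by
  rw [frobNorm_sq, frobNorm_sq, Finset.mul_sum]
  refine Finset.sum_le_sum fun j _ => ?_
  have hcol : (fun i => (A * B) i j) = A *ᵥ fun r => B r j := by
    funext i; simp [Matrix.mul_apply, Matrix.mulVec, dotProduct]
  rw [← mul_pow, hcol]
  exact pow_le_pow_left₀ (norm_nonneg _) (A.l2_opNorm_mulVec (WithLp.toLp 2 fun r => B r j)) 2

lemma opNorm_mul_sq_le {d₁ d₂ d₃ : ℕ} (A : Matrix (Fin d₁) (Fin d₂) ℝ)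
    (B : Matrix (Fin d₂) (Fin d₃) ℝ) : opNorm (A * B) ^ 2 ≤ opNorm A ^ 2 * opNorm B ^ 2 := by
  rw [← mul_pow]
  exact pow_le_pow_left₀ (norm_nonneg _) (Matrix.l2_opNorm_mul A B) 2

section Measurability

variable {d₁ d₂ d₃ m n : ℕ}

lemma MMeasurable.comp {f : (Fin n → ℝ) → Matrix (Fin d₁) (Fin d₂) ℝ} (hf : MMeasurable f)
    {g : (Fin m → ℝ) → Fin n → ℝ} (hg : Measurable g) : MMeasurable fun x => f (g x) :=
  fun p q => (hf p q).comp hg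

lemma MMeasurable.measurable_opNorm {f : (Fin n → ℝ) → Matrix (Fin d₁) (Fin d₂) ℝ}
    (hf : MMeasurable f) : Measurable fun x => opNorm (f x) := by
  have hcont : Continuous fun A : Fin d₁ → Fin d₂ → ℝ => opNorm (Matrix.of A) :=
    continuous_norm (E := Matrix (Fin d₁) (Fin d₂) ℝ)
  exact hcont.measurable.comp (measurable_pi_lambda _ fun p => measurable_pi_lambda _ (hf p))

lemma MMeasurable.measurable_frobNorm {f : (Fin n → ℝ) → Matrix (Fin d₁) (Fin d₂) ℝ}
    (hf : MMeasurable f) : Measurable fun x => frobNorm (f x) :=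
  (Finset.measurable_sum _ fun i _ => Finset.measurable_sum _ fun j _ =>
    (hf i j).pow_const 2).sqrt

lemma MMeasurable.trprod {f : (Fin (m + 1) → ℝ) → Matrix (Fin d₁) (Fin d₂) ℝ}
    {g : (Fin (n + 1) → ℝ) → Matrix (Fin d₂) (Fin d₃) ℝ} (hf : MMeasurable f)
    (hg : MMeasurable g) : MMeasurable (trprod f g) := fun p q => by
  simp only [_root_.trprod, Matrix.mul_apply]
  exact Finset.measurable_sum _ fun r _ =>
    ((hf.comp (by fun_prop)) p r).mul ((hg.comp (by fun_prop)) r q)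

end Measurability

section Simplex

def headD {α : Type*} {n : ℕ} (b : Fin n → α) (t : α) : α := (Fin.snoc b t : Fin (n + 1) → α) 0

@[simp] lemma headD_zero {α : Type*} (b : Fin 0 → α) (t : α) : headD b t = t := rfl

@[simp] lemma headD_succ {α : Type*} {n : ℕ} (b : Fin (n + 1) → α) (t : α) : headD b t = b 0 :=
  Fin.snoc_apply_zero ..

lemma measurableSet_simplex (t T : ℝ) (n : ℕ) : MeasurableSet (simplex t T n) := by
  simp only [simplex, Set.ofPred_and, Set.ofPred_forall]
  measurability

variable {t T : ℝ} {m n : ℕ}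

lemma le_headD_of_mem_simplex {b : Fin n → ℝ} (hb : b ∈ simplex t T n) : t ≤ headD b t := by
  cases n with
  | zero => rfl
  | succ n => exact (headD_succ b t).symm ▸ (hb.1 0).1.le

lemma apply_le_headD_of_mem_simplex {b : Fin n → ℝ} (hb : b ∈ simplex t T n) (j : Fin n) :
    b j ≤ headD b t := by
  cases n with
  | zero => exact j.elim0
  | succ n =>
    rw [headD_succ]
    rcases (Fin.zero_le j).eq_or_lt with h | h
    · rw [h]
    · exact (hb.2 0 j h).le

lemma append_mem_simplex_iff (a : Fin m → ℝ) (b : Fin n → ℝ) :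
    Fin.append a b ∈ simplex t T (m + n) ↔ b ∈ simplex t T n ∧ a ∈ simplex (headD b t) T m := by
  constructor
  · rintro ⟨hIoo, hlt⟩
    refine ⟨⟨fun j => by simpa using hIoo (Fin.natAdd m j), fun i j hij => ?_⟩,
      ⟨fun i => ⟨?_, by simpa using (hIoo (Fin.castAdd n i)).2⟩, fun i j hij => ?_⟩⟩
    · simpa using hlt (Fin.natAdd m i) (Fin.natAdd m j) (by simpa using hij)
    · cases n with
      | zero => simpa only [Fin.append_left, headD_zero] using (hIoo (Fin.castAdd 0 i)).1
      | succ n => simpa using hlt (Fin.castAdd _ i) (Fin.natAdd m 0) (by simp [Fin.lt_def])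
    · simpa using hlt (Fin.castAdd n i) (Fin.castAdd n j) hij
  · rintro ⟨hb, ha⟩
    refine ⟨fun i => ?_, fun i j hij => ?_⟩
    · induction i using Fin.addCases with
      | left i => simpa using ⟨(le_headD_of_mem_simplex hb).trans_lt (ha.1 i).1, (ha.1 i).2⟩
      | right j => simpa using hb.1 j
    · induction i using Fin.addCases with
      | left i => induction j using Fin.addCases with
        | left j => simpa using ha.2 i j hij
        | right j => simpa using (apply_le_headD_of_mem_simplex hb j).trans_lt (ha.1 i).1
      | right i => induction j using Fin.addCases with
        | left j => simp [Fin.lt_def] at hij; omega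
        | right j => simpa using hb.2 i j (by simpa using hij)

lemma measurePreserving_finAppend (α : Type*) [MeasureSpace α] [SigmaFinite (volume : Measure α)]
    (m n : ℕ) : MeasurePreserving (fun p : (Fin m → α) × (Fin n → α) => Fin.append p.1 p.2) := by
  have h := (volume_measurePreserving_piCongrLeft (fun _ : Fin (m + n) => α) finSumFinEquiv).comp
    (volume_measurePreserving_sumPiEquivProdPi_symm (fun _ : Fin m ⊕ Fin n => α))
  convert h using 1 <;> try rfl
  funext p i
  induction i using Fin.addCases <;>
    simp [MeasurableEquiv.piCongrLeft, Equiv.piCongrLeft, MeasurableEquiv.sumPiEquivProdPi]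

lemma lintegral_simplex_add {F : (Fin (m + n) → ℝ) → ℝ≥0∞} (hF : Measurable F) :
    ∫⁻ s in simplex t T (m + n), F s =
      ∫⁻ b in simplex t T n, ∫⁻ a in simplex (headD b t) T m, F (Fin.append a b) := by
  have hFs : Measurable ((simplex t T (m + n)).indicator F) :=
    hF.indicator (measurableSet_simplex ..)
  rw [← lintegral_indicator (measurableSet_simplex ..),
    ← (measurePreserving_finAppend ℝ m n).lintegral_comp hFs, Measure.volume_eq_prod,
    lintegral_prod_symm, ← lintegral_indicator (measurableSet_simplex ..)]
  · classical
    congr 1 with b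
    by_cases hb : b ∈ simplex t T n
    · rw [Set.indicator_of_mem hb, ← lintegral_indicator (measurableSet_simplex ..)]
      simp [Set.indicator_apply, append_mem_simplex_iff, hb]
    · simp [append_mem_simplex_iff, hb]
  · exact (hFs.comp (measurePreserving_finAppend ℝ m n).measurable).aemeasurable

lemma ae_simplex_headD_of_ae_Ioo {S : ℝ} {P : ℝ → Prop}
    (hP : ∀ᵐ u ∂volume.restrict (Set.Ioo S T), P u) (hSt : S ≤ t) (ht : n = 0 → P t) :
    ∀ᵐ b ∂volume.restrict (simplex t T n), P (headD b t) := by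
  cases n with
  | zero => exact ae_of_all _ fun b => ht rfl
  | succ n =>
    have h0 : ∀ᵐ b : Fin (n + 1) → ℝ, b 0 ∈ Set.Ioo S T → P (b 0) :=
      (Measure.tendsto_eval_ae_ae (μ := fun _ => volume) (i := 0)).eventually
        ((ae_restrict_iff' measurableSet_Ioo).1 hP)
    filter_upwards [ae_restrict_of_ae h0, ae_restrict_mem (measurableSet_simplex ..)] with b hb hmem
    exact (headD_succ b t).symm ▸ hb ⟨hSt.trans_lt (hmem.1 0).1, (hmem.1 0).2⟩

lemma lintegral_simplex_le_of_append_le {C : ℝ≥0∞} {F : (Fin (m + n) → ℝ) → ℝ≥0∞}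
    {φ : (Fin (m + 1) → ℝ) → ℝ≥0∞} {ψ : (Fin n → ℝ) → ℝ≥0∞}
    (hF : Measurable F) (hφ : Measurable φ) (hψ : Measurable ψ)
    (hle : ∀ a b, F (Fin.append a b) ≤ φ (Fin.snoc a (headD b t)) * ψ b)
    (hφC : ∀ᵐ b ∂volume.restrict (simplex t T n),
      ∫⁻ a in simplex (headD b t) T m, φ (Fin.snoc a (headD b t)) ≤ C) :
    ∫⁻ s in simplex t T (m + n), F s ≤ C * ∫⁻ b in simplex t T n, ψ b := by
  rw [lintegral_simplex_add hF, ← lintegral_const_mul _ hψ]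
  refine lintegral_mono_ae (hφC.mono fun b hb => ?_)
  calc ∫⁻ a in simplex (headD b t) T m, F (Fin.append a b)
      ≤ ∫⁻ a in simplex (headD b t) T m, φ (Fin.snoc a (headD b t)) * ψ b :=
        lintegral_mono fun a => hle a b
    _ = (∫⁻ a in simplex (headD b t) T m, φ (Fin.snoc a (headD b t))) * ψ b :=
        lintegral_mul_const _ (hφ.comp (by fun_prop))
    _ ≤ C * ψ b := mul_le_mul_left hb _

end Simplex

section TriangleProduct

variable {d₁ d₂ d₃ m n : ℕ}

lemma trprod_append (f : (Fin (m + 1) → ℝ) → Matrix (Fin d₁) (Fin d₂) ℝ)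
    (g : (Fin (n + 1) → ℝ) → Matrix (Fin d₂) (Fin d₃) ℝ) (a : Fin m → ℝ) (b : Fin (n + 1) → ℝ) :
    trprod f g (Fin.append a b : Fin (m + (n + 1)) → ℝ) = f (Fin.snoc a (b 0)) * g b := by
  unfold trprod
  congr 2 with i
  · induction i using Fin.lastCases with
    | last => rw [Fin.snoc_last]; exact Fin.append_right a b 0
    | cast i => rw [Fin.snoc_castSucc]; exact Fin.append_left a b i
  · exact Fin.append_right a b i

lemma trprod_snoc_append (f : (Fin (m + 1) → ℝ) → Matrix (Fin d₁) (Fin d₂) ℝ)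
    (g : (Fin (n + 1) → ℝ) → Matrix (Fin d₂) (Fin d₃) ℝ) (a : Fin m → ℝ) (b : Fin n → ℝ)
    (t : ℝ) : trprod f g (Fin.snoc (Fin.append a b) t) =
      f (Fin.snoc a (headD b t)) * g (Fin.snoc b t) := by
  rw [← Fin.append_snoc, trprod_append]
  rfl

end TriangleProduct

lemma ENNReal.rpow_half_le_iff {x y : ℝ≥0∞} : x ^ (1 / 2 : ℝ) ≤ y ↔ x ≤ y ^ 2 := by
  rw [one_div, ENNReal.rpow_inv_le_iff two_pos, ENNReal.rpow_two]

section Volterra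

variable {d : ℕ} {S T : ℝ} {m n : ℕ}

def sliceNormSq (T : ℝ) (k : (Fin (n + 1) → ℝ) → Matrix (Fin d) (Fin d) ℝ) (t : ℝ) : ℝ≥0∞ :=
  ∫⁻ s in simplex t T n, ENNReal.ofReal (opNorm (k (Fin.snoc s t)) ^ 2)

lemma ae_sliceNormSq_le_vNormE_sq (k : (Fin (n + 1) → ℝ) → Matrix (Fin d) (Fin d) ℝ) :
    ∀ᵐ t ∂volume.restrict (Set.Ioo S T), sliceNormSq T k t ≤ vNormE S T k ^ 2 :=
  (ENNReal.ae_le_essSup _).mono fun _ ht => ENNReal.rpow_half_le_iff.1 ht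

lemma vNormE_le_of_ae_sliceNormSq_le {k : (Fin (n + 1) → ℝ) → Matrix (Fin d) (Fin d) ℝ}
    {C : ℝ≥0∞} (h : ∀ᵐ t ∂volume.restrict (Set.Ioo S T), sliceNormSq T k t ≤ C ^ 2) :
    vNormE S T k ≤ C :=
  essSup_le_of_ae_le _ (h.mono fun _ ht => ENNReal.rpow_half_le_iff.2 ht)

lemma sliceNormSq_trprod_le {k₁ : (Fin (m + 1) → ℝ) → Matrix (Fin d) (Fin d) ℝ}
    {k₂ : (Fin (n + 1) → ℝ) → Matrix (Fin d) (Fin d) ℝ} (hk₁ : MMeasurable k₁)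
    (hk₂ : MMeasurable k₂) {t : ℝ} (hSt : S ≤ t) (ht : sliceNormSq T k₁ t ≤ vNormE S T k₁ ^ 2) :
    sliceNormSq T (trprod k₁ k₂) t ≤ vNormE S T k₁ ^ 2 * sliceNormSq T k₂ t := by
  refine lintegral_simplex_le_of_append_le (φ := fun x => ENNReal.ofReal (opNorm (k₁ x) ^ 2))
    (((hk₁.trprod hk₂).comp (by fun_prop)).measurable_opNorm.pow_const 2).ennreal_ofReal
    (hk₁.measurable_opNorm.pow_const 2).ennreal_ofReal
    ((hk₂.comp (by fun_prop)).measurable_opNorm.pow_const 2).ennreal_ofReal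
    (fun a b => ?_) (ae_simplex_headD_of_ae_Ioo (ae_sliceNormSq_le_vNormE_sq k₁) hSt fun _ => ht)
  rw [trprod_snoc_append, ← ENNReal.ofReal_mul (sq_nonneg _)]
  exact ENNReal.ofReal_le_ofReal (opNorm_mul_sq_le _ _)

lemma vNormE_trprod_le {k₁ : (Fin (m + 1) → ℝ) → Matrix (Fin d) (Fin d) ℝ}
    {k₂ : (Fin (n + 1) → ℝ) → Matrix (Fin d) (Fin d) ℝ} (hk₁ : MMeasurable k₁)
    (hk₂ : MMeasurable k₂) :
    vNormE S T (trprod k₁ k₂) ≤ vNormE S T k₁ * vNormE S T k₂ := by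
  refine vNormE_le_of_ae_sliceNormSq_le ?_
  filter_upwards [ae_sliceNormSq_le_vNormE_sq k₁, ae_sliceNormSq_le_vNormE_sq k₂,
    ae_restrict_mem measurableSet_Ioo] with t h₁ h₂ ht
  calc sliceNormSq T (trprod k₁ k₂) t ≤ vNormE S T k₁ ^ 2 * sliceNormSq T k₂ t :=
        sliceNormSq_trprod_le hk₁ hk₂ ht.1.le h₁
    _ ≤ vNormE S T k₁ ^ 2 * vNormE S T k₂ ^ 2 := by gcongr
    _ = (vNormE S T k₁ * vNormE S T k₂) ^ 2 := (mul_pow ..).symm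

lemma l2sqE_trprod_le {d₁ : ℕ} {k : (Fin (m + 1) → ℝ) → Matrix (Fin d) (Fin d) ℝ}
    {f : (Fin (n + 1) → ℝ) → Matrix (Fin d) (Fin d₁) ℝ} (hk : MMeasurable k)
    (hf : MMeasurable f) : l2sqE S T (trprod k f) ≤ vNormE S T k ^ 2 * l2sqE S T f := by
  refine lintegral_simplex_le_of_append_le (φ := fun x => ENNReal.ofReal (opNorm (k x) ^ 2))
    ((hk.trprod hf).measurable_frobNorm.pow_const 2).ennreal_ofReal
    (hk.measurable_opNorm.pow_const 2).ennreal_ofReal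
    (hf.measurable_frobNorm.pow_const 2).ennreal_ofReal
    (fun a b => ?_) (ae_simplex_headD_of_ae_Ioo (ae_sliceNormSq_le_vNormE_sq k) le_rfl (by simp))
  rw [trprod_append, headD_succ, ← ENNReal.ofReal_mul (sq_nonneg _)]
  exact ENNReal.ofReal_le_ofReal (frobNorm_mul_sq_le _ _)

end Volterra

theorem stmt2_general (S T : ℝ) (d d₁ : ℕ) (m n : ℕ) :
    (∀ (k₁ : (Fin (m+1) → ℝ) → Matrix (Fin d) (Fin d) ℝ)
       (k₂ : (Fin (n+1) → ℝ) → Matrix (Fin d) (Fin d) ℝ),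
       MemV S T k₁ → MemV S T k₂ →
       MemV S T (trprod k₁ k₂) ∧
         vNorm S T (trprod k₁ k₂) ≤ vNorm S T k₁ * vNorm S T k₂) ∧
    (∀ (k : (Fin (m+1) → ℝ) → Matrix (Fin d) (Fin d) ℝ)
       (f : (Fin (n+1) → ℝ) → Matrix (Fin d) (Fin d₁) ℝ),
       MemV S T k → MemL2 S T f →
       MemL2 S T (trprod k f) ∧
         l2Norm S T (trprod k f) ≤ vNorm S T k * l2Norm S T f) := by
  refine ⟨fun k₁ k₂ h₁ h₂ => ?_, fun k f hk hf => ?_⟩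
  · have hle := vNormE_trprod_le (S := S) (T := T) h₁.1 h₂.1
    have hfin := ENNReal.mul_ne_top h₁.2.ne h₂.2.ne
    exact ⟨⟨h₁.1.trprod h₂.1, hle.trans_lt hfin.lt_top⟩,
      (ENNReal.toReal_mono hfin hle).trans_eq ENNReal.toReal_mul⟩
  · have hle := l2sqE_trprod_le (S := S) (T := T) hk.1 hf.1
    have hfin :=
      ENNReal.mul_ne_top hk.2.ne (ENNReal.rpow_ne_top_of_nonneg one_half_pos.le hf.2.ne)
    refine ⟨⟨hk.1.trprod hf.1, hle.trans_lt (ENNReal.mul_lt_top (ENNReal.pow_lt_top hk.2) hf.2)⟩,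
      (ENNReal.toReal_mono hfin ?_).trans_eq ENNReal.toReal_mul⟩
    rw [ENNReal.rpow_half_le_iff, mul_pow, ← ENNReal.rpow_two (l2sqE S T f ^ _), one_div,
      ENNReal.rpow_inv_rpow two_ne_zero]
    exact hle

/-- (i) The ▷-product of Volterra kernels is a Volterra kernel, with
`⦀k₁ ▷ k₂⦀ ≤ ⦀k₁⦀ ⦀k₂⦀`.  (ii) The ▷-product of a Volterra kernel with an L² kernel
is an L² kernel, with `‖k ▷ f‖ ≤ ⦀k⦀ ‖f‖`. -/
theorem stmt2 (S T : ℝ) (hS : 0 ≤ S) (hST : S < T) (d d₁ : ℕ) (hd : 0 < d) (hd₁ : 0 < d₁)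
    (m n : ℕ) :
    (∀ (k₁ : (Fin (m+1) → ℝ) → Matrix (Fin d) (Fin d) ℝ)
       (k₂ : (Fin (n+1) → ℝ) → Matrix (Fin d) (Fin d) ℝ),
       MemV S T k₁ → MemV S T k₂ →
       MemV S T (trprod k₁ k₂) ∧
         vNorm S T (trprod k₁ k₂) ≤ vNorm S T k₁ * vNorm S T k₂) ∧
    (∀ (k : (Fin (m+1) → ℝ) → Matrix (Fin d) (Fin d) ℝ)
       (f : (Fin (n+1) → ℝ) → Matrix (Fin d) (Fin d₁) ℝ),
       MemV S T k → MemL2 S T f →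
       MemL2 S T (trprod k f) ∧
         l2Norm S T (trprod k f) ≤ vNorm S T k * l2Norm S T f) :=
  stmt2_general S T d d₁ m n
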